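/- Let A ⊆ B be two sets of primes with ∑_{q∈B}(q−1)^{-s} finite for some 0 < s ≤ 1. Let T̃ be the set of integers n all of whose prime factors lie in B, such that either some prime in B∖A divides n to a power at least 2, or at least two distinct primes of B∖A divide n. Then ∑_{n∈T̃} n^{-s} ≤ 2 λ(s)² (V_B − V_A)² e^{λ(s) V_B}, where V_A = ∑_{q∈A}(q−1)^{-s}, V_B = ∑_{q∈B}(q−1)^{-s}, λ(s)=1/(2^s−1). -/

import Mathlib

/-!
Every `n` in the sum factors as `p * q * m` with `p, q ∈ B \ A` and all prime factors of `m` in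
`B`, so the sum is at most `(∑_{p ∈ B \ A} p^(-s))² · ∑_m m^(-s)`. The first factor is at most
`V_B - V_A`. The second is an Euler product over primes of `B`: concavity of `x ↦ x^s` gives
`x^s - 1 ≥ (2^s - 1)(x - 1)^s`, so each Euler factor satisfies
`(1 - p^(-s))⁻¹ ≤ 1 + λ(s) (p - 1)^(-s) ≤ exp (λ(s) (p - 1)^(-s))`, and the product is at most
`exp (λ(s) V_B)`. Finally `2 λ(s)² ≥ 1`.
-/

open Real Function

theorem ConcaveOn.map_add_sub_map_le_of_le {𝕜 : Type*} [Field 𝕜] [LinearOrder 𝕜]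
    [IsStrictOrderedRing 𝕜] {s : Set 𝕜} {f : 𝕜 → 𝕜} (hf : ConcaveOn 𝕜 s f) {x y h : 𝕜}
    (hx : x ∈ s) (hyh : y + h ∈ s) (hxy : x ≤ y) (hh : 0 ≤ h) :
    f (y + h) - f y ≤ f (x + h) - f x := by
  rcases hh.eq_or_lt with rfl | hh
  · simp
  -- `y` and `x + h` are the convex combinations of `x` and `y + h` with swapped weights.
  have hd : 0 < y + h - x := by linarith
  have ha : 0 ≤ h / (y + h - x) := by positivity
  have hb : 0 ≤ (y - x) / (y + h - x) := div_nonneg (by linarith) hd.le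
  have hab : h / (y + h - x) + (y - x) / (y + h - x) = 1 := by field
  have hy := hf.2 hx hyh ha hb hab
  have hxh := hf.2 hx hyh hb ha (by linarith)
  have ey : (h / (y + h - x)) • x + ((y - x) / (y + h - x)) • (y + h) = y := by
    simp only [smul_eq_mul]; field
  have exh : ((y - x) / (y + h - x)) • x + (h / (y + h - x)) • (y + h) = x + h := by
    simp only [smul_eq_mul]; field
  rw [ey] at hy
  rw [exh] at hxh
  simp only [smul_eq_mul] at hy hxh
  linear_combination hy + hxh - (f x + f (y + h)) * hab

theorem Finset.sum_le_tsum_subtype {α : Type*} {f : α → ℝ} {B : Set α} (F : Finset α)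
    (hF : ∀ x ∈ F, x ∈ B) (hf : Summable fun x : B => f x) (hf0 : ∀ x ∈ B, 0 ≤ f x) :
    ∑ x ∈ F, f x ≤ ∑' x : B, f x := by
  classical
  rw [← Finset.sum_subtype_of_mem f hF]
  exact hf.sum_le_tsum _ fun x _ => hf0 x x.2

theorem Summable.tsum_subtype_sdiff {α G : Type*} [NormedAddCommGroup G] [CompleteSpace G]
    {f : α → G} {A B : Set α} (hAB : A ⊆ B)
    (hf : Summable fun x : B => f x) :
    ∑' x : ↥(B \ A), f x = ∑' x : B, f x - ∑' x : A, f x := by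
  have h := Summable.tsum_union_disjoint (f := f) (s := A) (t := B \ A) Set.disjoint_sdiff_right
    (hf.comp_injective (i := Set.inclusion hAB) (Set.inclusion_injective hAB))
    (hf.comp_injective (i := Set.inclusion Set.sdiff_subset) (Set.inclusion_injective _))
  rw [Set.union_sdiff_cancel hAB] at h
  rw [h]
  abel

theorem summable_and_tsum_le_tsum_mul_tsum_of_injective {γ α β : Type*} {h : γ → ℝ}
    {f : α → ℝ} {g : β → ℝ} (hf : Summable f) (hg : Summable g) (hh0 : 0 ≤ h) (hf0 : 0 ≤ f)
    (hg0 : 0 ≤ g) (e : γ → α × β) (he : Injective e) (hle : ∀ c, h c ≤ f (e c).1 * g (e c).2) :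
    Summable h ∧ ∑' c, h c ≤ (∑' a, f a) * ∑' b, g b := by
  have hfg := hf.mul_of_nonneg hg hf0 hg0
  have hh : Summable h := (hfg.comp_injective he).of_nonneg_of_le hh0 hle
  refine ⟨hh, ?_⟩
  rw [hf.tsum_mul_tsum hg hfg]
  exact hh.tsum_le_tsum_of_inj e he (fun _ _ => mul_nonneg (hf0 _) (hg0 _)) hle hfg

theorem two_rpow_sub_one_mul_rpow_le {s a : ℝ} (hs0 : 0 ≤ s) (hs1 : s ≤ 1) (ha : 1 ≤ a) :
    (2 ^ s - 1) * a ^ s ≤ (a + 1) ^ s - 1 := by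
  have h := (Real.concaveOn_rpow hs0 hs1).map_add_sub_map_le_of_le (x := 1) (y := a) (h := a)
    (by simp) (by simp; linarith) ha (by linarith)
  rw [one_rpow, show a + a = 2 * a by ring, mul_rpow zero_le_two (by linarith), add_comm 1 a] at h
  linarith

theorem one_le_one_div_two_rpow_sub_one {s : ℝ} (hs0 : 0 < s) (hs1 : s ≤ 1) :
    1 ≤ 1 / ((2 : ℝ) ^ s - 1) := by
  have : (2 : ℝ) ^ s ≤ 2 := by simpa using rpow_le_rpow_of_exponent_le one_le_two hs1
  rw [le_div_iff₀ (by linarith [one_lt_rpow one_lt_two hs0]), one_mul]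
  linarith

theorem inv_one_sub_rpow_neg_le_exp {s x : ℝ} (hs0 : 0 < s) (hs1 : s ≤ 1) (hx : 2 ≤ x) :
    (1 - x ^ (-s))⁻¹ ≤ exp (1 / ((2 : ℝ) ^ s - 1) * (x - 1) ^ (-s)) := by
  have h2s : 0 < (2 : ℝ) ^ s - 1 := by
    linarith [one_lt_rpow (by norm_num : (1 : ℝ) < 2) hs0]
  have hx1 : 0 < (x - 1) ^ s := rpow_pos_of_pos (by linarith) s
  have hkey := two_rpow_sub_one_mul_rpow_le hs0.le hs1 (a := x - 1) (by linarith)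
  rw [sub_add_cancel] at hkey
  have hxs : 0 < x ^ s - 1 := (mul_pos h2s hx1).trans_le hkey
  calc (1 - x ^ (-s))⁻¹ = 1 + (x ^ s - 1)⁻¹ := by
        have hne := hxs.ne'
        rw [rpow_neg (by linarith)]
        field_simp
        ring
    _ ≤ 1 + ((2 ^ s - 1) * (x - 1) ^ s)⁻¹ := by gcongr
    _ = 1 + 1 / ((2 : ℝ) ^ s - 1) * (x - 1) ^ (-s) := by
        rw [rpow_neg (by linarith), mul_inv, one_div]
    _ ≤ _ := by linarith [add_one_le_exp (1 / ((2 : ℝ) ^ s - 1) * (x - 1) ^ (-s))]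

@[simps]
noncomputable def natRpowNegHom (s : ℝ) : ℕ →* ℝ where
  toFun n := (n : ℝ) ^ (-s)
  map_one' := by simp
  map_mul' m n := by
    push_cast
    exact mul_rpow (Nat.cast_nonneg m) (Nat.cast_nonneg n)

theorem summable_factoredNumbers_rpow_neg_and_tsum_le {s : ℝ} (hs0 : 0 < s) (hs1 : s ≤ 1)
    (F : Finset ℕ) :
    Summable (fun m : Nat.factoredNumbers F => ((m : ℕ) : ℝ) ^ (-s)) ∧
      ∑' m : Nat.factoredNumbers F, ((m : ℕ) : ℝ) ^ (-s) ≤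
        exp (1 / ((2 : ℝ) ^ s - 1) * ∑ p ∈ F with p.Prime, ((p : ℝ) - 1) ^ (-s)) := by
  have hlt {p : ℕ} (hp : p.Prime) : (p : ℝ) ^ (-s) < 1 :=
    rpow_lt_one_of_one_lt_of_neg (by exact_mod_cast hp.one_lt) (neg_neg_of_pos hs0)
  obtain ⟨hsum, hprod⟩ :=
    EulerProduct.summable_and_hasSum_factoredNumbers_prod_filter_prime_geometric (F := ℝ)
      (f := natRpowNegHom s) (fun hp => by
        simpa [norm_of_nonneg (rpow_nonneg (Nat.cast_nonneg _) _)] using hlt hp) F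
  simp only [natRpowNegHom_apply] at hsum hprod
  refine ⟨hsum.of_norm, ?_⟩
  rw [hprod.tsum_eq, Finset.mul_sum, exp_sum]
  refine Finset.prod_le_prod (fun p hp => ?_) (fun p hp => ?_)
  · exact inv_nonneg.2 (sub_nonneg.2 (hlt (Finset.mem_filter.1 hp).2).le)
  · exact inv_one_sub_rpow_neg_le_exp hs0 hs1 (by exact_mod_cast (Finset.mem_filter.1 hp).2.two_le)

def factoredBy (B : Set ℕ) : Set ℕ := {m | 0 < m ∧ ∀ p, p.Prime → p ∣ m → p ∈ B}

theorem summable_factoredBy_rpow_neg_and_tsum_le {B : Set ℕ} (hB : ∀ p ∈ B, p.Prime)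
    {s : ℝ} (hs0 : 0 < s) (hs1 : s ≤ 1) (hsum : Summable fun q : B => ((q : ℝ) - 1) ^ (-s)) :
    Summable (fun m : factoredBy B => ((m : ℕ) : ℝ) ^ (-s)) ∧
      ∑' m : factoredBy B, ((m : ℕ) : ℝ) ^ (-s) ≤
        exp (1 / ((2 : ℝ) ^ s - 1) * ∑' q : B, ((q : ℝ) - 1) ^ (-s)) := by
  have hnonneg : 0 ≤ fun m : factoredBy B => ((m : ℕ) : ℝ) ^ (-s) :=
    fun _ => rpow_nonneg (Nat.cast_nonneg _) _
  suffices h : ∀ U : Finset (factoredBy B), ∑ m ∈ U, ((m : ℕ) : ℝ) ^ (-s) ≤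
      exp (1 / ((2 : ℝ) ^ s - 1) * ∑' q : B, ((q : ℝ) - 1) ^ (-s)) from
    ⟨summable_of_sum_le hnonneg h, Real.tsum_le_of_sum_le hnonneg h⟩
  intro U
  set F := U.biUnion fun m => (m : ℕ).primeFactors
  have hFB : ∀ p ∈ F, p ∈ B := by
    simp only [F, Finset.mem_biUnion, Nat.mem_primeFactors]
    rintro p ⟨m, -, hp, hpm, -⟩
    exact m.2.2 p hp hpm
  have hUF : ∀ m ∈ U.map (Function.Embedding.subtype _), m ∈ Nat.factoredNumbers F := by
    simp only [Finset.mem_map, Function.Embedding.coe_subtype]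
    rintro _ ⟨m, hm, rfl⟩
    exact Nat.mem_factoredNumbers'.2 fun p hp hpm =>
      Finset.mem_biUnion.2 ⟨m, hm, Nat.mem_primeFactors.2 ⟨hp, hpm, m.2.1.ne'⟩⟩
  obtain ⟨hsumF, hleF⟩ := summable_factoredNumbers_rpow_neg_and_tsum_le hs0 hs1 F
  have hw0 : ∀ q ∈ B, 0 ≤ ((q : ℝ) - 1) ^ (-s) := fun q hq =>
    rpow_nonneg (by linarith [show (1 : ℝ) ≤ q by exact_mod_cast (hB q hq).one_lt.le]) _
  have hFsum : ∑ p ∈ F with p.Prime, ((p : ℝ) - 1) ^ (-s) ≤ ∑' q : B, ((q : ℝ) - 1) ^ (-s) :=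
    Finset.sum_le_tsum_subtype _ (fun p hp => hFB p (Finset.mem_filter.1 hp).1) hsum hw0
  calc ∑ m ∈ U, ((m : ℕ) : ℝ) ^ (-s)
      = ∑ m ∈ U.map (Function.Embedding.subtype _), (m : ℝ) ^ (-s) := by rw [Finset.sum_map]; rfl
    _ ≤ ∑' m : Nat.factoredNumbers F, ((m : ℕ) : ℝ) ^ (-s) :=
        Finset.sum_le_tsum_subtype _ hUF hsumF fun _ _ => rpow_nonneg (Nat.cast_nonneg _) _
    _ ≤ _ := hleF.trans (exp_le_exp.2 (mul_le_mul_of_nonneg_left hFsum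
        (zero_le_one.trans (one_le_one_div_two_rpow_sub_one hs0 hs1))))

theorem mem_factoredBy_of_dvd {B : Set ℕ} {m n : ℕ} (hn : n ∈ factoredBy B) (hmn : m ∣ n) :
    m ∈ factoredBy B :=
  ⟨Nat.pos_of_dvd_of_pos hmn hn.1, fun p hp hpm => hn.2 p hp (hpm.trans hmn)⟩

theorem exists_mul_mul_eq_of_mem_factoredBy {A B : Set ℕ} (hB : ∀ p ∈ B, p.Prime) {n : ℕ}
    (hn : n ∈ factoredBy B)
    (h : (∃ p : ℕ, p ∈ B ∧ p ∉ A ∧ p ^ 2 ∣ n) ∨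
      (∃ p q : ℕ, p ∈ B ∧ p ∉ A ∧ q ∈ B ∧ q ∉ A ∧ p ≠ q ∧ p ∣ n ∧ q ∣ n)) :
    ∃ p ∈ B \ A, ∃ q ∈ B \ A, ∃ m ∈ factoredBy B, n = p * q * m := by
  suffices ∃ p ∈ B \ A, ∃ q ∈ B \ A, p * q ∣ n by
    obtain ⟨p, hp, q, hq, m, rfl⟩ := this
    exact ⟨p, hp, q, hq, m, mem_factoredBy_of_dvd hn (dvd_mul_left m _), rfl⟩
  rcases h with ⟨p, hpB, hpA, hp2⟩ | ⟨p, q, hpB, hpA, hqB, hqA, hpq, hpn, hqn⟩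
  · exact ⟨p, ⟨hpB, hpA⟩, p, ⟨hpB, hpA⟩, sq p ▸ hp2⟩
  · exact ⟨p, ⟨hpB, hpA⟩, q, ⟨hqB, hqA⟩,
      ((Nat.coprime_primes (hB p hpB) (hB q hqB)).2 hpq).mul_dvd_of_dvd_of_dvd hpn hqn⟩

theorem summable_rpow_neg_and_tsum_le_sq_mul {D M T : Set ℕ} {s : ℝ}
    (hT : ∀ n ∈ T, ∃ p ∈ D, ∃ q ∈ D, ∃ m ∈ M, n = p * q * m)
    (hD : Summable fun p : D => ((p : ℕ) : ℝ) ^ (-s))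
    (hM : Summable fun m : M => ((m : ℕ) : ℝ) ^ (-s)) :
    Summable (fun n : T => ((n : ℕ) : ℝ) ^ (-s)) ∧
      ∑' n : T, ((n : ℕ) : ℝ) ^ (-s) ≤
        (∑' p : D, ((p : ℕ) : ℝ) ^ (-s)) ^ 2 * ∑' m : M, ((m : ℕ) : ℝ) ^ (-s) := by
  have hfactor (n : T) : ∃ x : (D × D) × M, (n : ℕ) = x.1.1 * x.1.2 * x.2 := by
    obtain ⟨p, hp, q, hq, m, hm, h⟩ := hT n n.2
    exact ⟨((⟨p, hp⟩, ⟨q, hq⟩), ⟨m, hm⟩), h⟩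
  choose e he using hfactor
  have hnonneg {S : Set ℕ} : 0 ≤ fun n : S => ((n : ℕ) : ℝ) ^ (-s) :=
    fun _ => rpow_nonneg (Nat.cast_nonneg _) _
  have hDD := hD.mul_of_nonneg hD hnonneg hnonneg
  rw [sq, hD.tsum_mul_tsum hD hDD]
  refine summable_and_tsum_le_tsum_mul_tsum_of_injective hDD hM hnonneg
    (fun _ => mul_nonneg (hnonneg _) (hnonneg _)) hnonneg e
    (fun a b hab => Subtype.ext (by rw [he a, he b, hab])) fun n => le_of_eq ?_
  rw [he n]
  push_cast
  rw [mul_rpow (by positivity) (by positivity), mul_rpow (by positivity) (by positivity)]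

theorem summable_sdiff_rpow_neg_and_tsum_le_sub {A B : Set ℕ} (hAB : A ⊆ B)
    (hB : ∀ p ∈ B, p.Prime) {s : ℝ} (hs0 : 0 < s)
    (hsum : Summable fun q : B => ((q : ℝ) - 1) ^ (-s)) :
    Summable (fun p : ↥(B \ A) => ((p : ℕ) : ℝ) ^ (-s)) ∧
      ∑' p : ↥(B \ A), ((p : ℕ) : ℝ) ^ (-s) ≤
        ∑' q : B, ((q : ℝ) - 1) ^ (-s) - ∑' q : A, ((q : ℝ) - 1) ^ (-s) := by
  have hpow_le (p : ↥(B \ A)) : ((p : ℕ) : ℝ) ^ (-s) ≤ (((p : ℕ) : ℝ) - 1) ^ (-s) :=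
    rpow_le_rpow_of_nonpos (by linarith [show (2 : ℝ) ≤ p by exact_mod_cast (hB p p.2.1).two_le])
      (by linarith) (by linarith)
  have hsumD := hsum.comp_injective (Set.inclusion_injective (Set.sdiff_subset (t := A)))
  have hD : Summable fun p : ↥(B \ A) => ((p : ℕ) : ℝ) ^ (-s) :=
    hsumD.of_nonneg_of_le (fun _ => rpow_nonneg (Nat.cast_nonneg _) _) hpow_le
  refine ⟨hD, ?_⟩
  rw [← hsum.tsum_subtype_sdiff (f := fun q : ℕ => ((q : ℝ) - 1) ^ (-s)) hAB]
  exact hD.tsum_le_tsum hpow_le hsumD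

theorem stmt_10 (A B : Set ℕ) (hAB : A ⊆ B) (hB : ∀ p ∈ B, Nat.Prime p)
    (s : ℝ) (hs0 : 0 < s) (hs1 : s ≤ 1)
    (hsum : Summable fun q : B => (((q : ℕ) : ℝ) - 1) ^ (-s)) :
    (∑' n : {n : ℕ // 0 < n ∧ (∀ p : ℕ, Nat.Prime p → p ∣ n → p ∈ B) ∧
        ((∃ p : ℕ, p ∈ B ∧ p ∉ A ∧ p ^ 2 ∣ n) ∨
         (∃ p q : ℕ, p ∈ B ∧ p ∉ A ∧ q ∈ B ∧ q ∉ A ∧ p ≠ q ∧ p ∣ n ∧ q ∣ n))},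
      ((n : ℕ) : ℝ) ^ (-s)) ≤
      2 * (1 / ((2 : ℝ) ^ s - 1)) ^ 2 *
        ((∑' q : B, (((q : ℕ) : ℝ) - 1) ^ (-s)) -
          ∑' q : A, (((q : ℕ) : ℝ) - 1) ^ (-s)) ^ 2 *
        Real.exp ((1 / ((2 : ℝ) ^ s - 1)) * ∑' q : B, (((q : ℕ) : ℝ) - 1) ^ (-s)) := by
  obtain ⟨hD, hDle⟩ := summable_sdiff_rpow_neg_and_tsum_le_sub hAB hB hs0 hsum
  obtain ⟨hM, hMle⟩ := summable_factoredBy_rpow_neg_and_tsum_le hB hs0 hs1 hsum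
  obtain ⟨-, hT⟩ := summable_rpow_neg_and_tsum_le_sq_mul
    (T := {n | 0 < n ∧ (∀ p : ℕ, Nat.Prime p → p ∣ n → p ∈ B) ∧
        ((∃ p : ℕ, p ∈ B ∧ p ∉ A ∧ p ^ 2 ∣ n) ∨
         (∃ p q : ℕ, p ∈ B ∧ p ∉ A ∧ q ∈ B ∧ q ∉ A ∧ p ≠ q ∧ p ∣ n ∧ q ∣ n))})
    (fun n hn => exists_mul_mul_eq_of_mem_factoredBy hB ⟨hn.1, hn.2.1⟩ hn.2.2) hD hM
  have hL := one_le_one_div_two_rpow_sub_one hs0 hs1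
  calc _ ≤ _ := hT
    _ ≤ _ := mul_le_mul (pow_le_pow_left₀ (tsum_nonneg fun _ => rpow_nonneg (Nat.cast_nonneg _) _)
        hDle 2) hMle (tsum_nonneg fun _ => rpow_nonneg (Nat.cast_nonneg _) _) (sq_nonneg _)
    _ ≤ _ := by
      rw [mul_assoc (2 * _)]
      exact le_mul_of_one_le_left (by positivity) (by nlinarith)
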